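/- arXiv:1601.02801 — 3 statements merged into one kernel-verified Lean document; each statement's English description precedes it below -/
import Mathlib

section
/- Under the stated setup, if the outcome regression model for the untreated is correctly specified, i.e. m₀ = E[Y₀ | 𝔪_Z] almost surely, then E[ψ₀ | 𝔪_Z] = E[Y₀ | 𝔪_Z] almost surely, regardless of whether p equals E[D | 𝔪_Z] (p may be any 𝔪_Z-measurable random variable with ε ≤ p ≤ 1−ε). -/
open MeasureTheory ProbabilityTheory

lemma condexp_mul_of_condIndepFun_binary
    {Ω : Type*} {mΩ : MeasurableSpace Ω} [StandardBorelSpace Ω] [Nonempty Ω]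
    (μ : Measure Ω) [IsProbabilityMeasure μ]
    (mZ : MeasurableSpace Ω) (hmZ : mZ ≤ mΩ)
    (X W : Ω → ℝ) (hX01 : ∀ ω, X ω = 0 ∨ X ω = 1)
    (hXm : Measurable[mΩ] X) (hWm : Measurable[mΩ] W)
    (hWint : Integrable W μ)
    (h : CondIndepFun mZ hmZ W X μ) :
    μ[fun ω => X ω * W ω | mZ] =ᵐ[μ] fun ω => (μ[X|mZ]) ω * (μ[W|mZ]) ω := by
  set κ := condExpKernel (mΩ := mΩ) μ mZ with hκ
  have hXabs : ∀ ω, |X ω| ≤ 1 := by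
    intro ω; rcases hX01 ω with h' | h' <;> simp [h']
  have hXint : Integrable X μ :=
    (integrable_const (1 : ℝ)).mono' (hXm.aestronglyMeasurable (μ := μ))
      (Filter.Eventually.of_forall fun ω => by simpa using hXabs ω)
  have hXWint : Integrable (fun ω => X ω * W ω) μ :=
    hWint.norm.mono' ((hXm.mul hWm).aestronglyMeasurable (μ := μ))
      (Filter.Eventually.of_forall fun ω => by
        simp only [Real.norm_eq_abs, abs_mul]
        calc |X ω| * |W ω| ≤ 1 * |W ω| :=
              mul_le_mul_of_nonneg_right (hXabs ω) (abs_nonneg _)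
          _ = ‖W ω‖ := by rw [one_mul, Real.norm_eq_abs])
  have hprod : ∀ᵐ ω ∂μ, ∀ q : ℚ,
      κ ω (W ⁻¹' Set.Ioi (q : ℝ) ∩ X ⁻¹' {1})
        = κ ω (W ⁻¹' Set.Ioi (q : ℝ)) * κ ω (X ⁻¹' {1}) := by
    refine ae_of_ae_trim hmZ (ae_all_iff.mpr fun q => ?_)
    exact h.measure_inter_preimage_eq_mul _ _
      (measurableSet_Ioi : MeasurableSet (Set.Ioi (q : ℝ)))
      (measurableSet_singleton (1 : ℝ))
  -- generating facts for the σ-algebra of X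
  have hXpre1 : MeasurableSet[MeasurableSpace.comap X (inferInstanceAs (MeasurableSpace ℝ))]
      (X ⁻¹' {1}) := ⟨{1}, measurableSet_singleton 1, rfl⟩
  have hgen2 : MeasurableSpace.comap X (inferInstanceAs (MeasurableSpace ℝ))
      = MeasurableSpace.generateFrom ({X ⁻¹' {1}} : Set (Set Ω)) := by
    refine le_antisymm ?_ (MeasurableSpace.generateFrom_le ?_)
    · rintro t ⟨s, -, rfl⟩
      have h1 : MeasurableSet[MeasurableSpace.generateFrom ({X ⁻¹' {1}} : Set (Set Ω))]
          (X ⁻¹' {1}) := MeasurableSpace.measurableSet_generateFrom rfl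
      by_cases h1s : (1 : ℝ) ∈ s <;> by_cases h0s : (0 : ℝ) ∈ s
      · have he : X ⁻¹' s = Set.univ := by
          ext ω; rcases hX01 ω with h' | h' <;> simp [Set.mem_preimage, h', h0s, h1s]
        rw [he]
        exact @MeasurableSet.univ Ω (MeasurableSpace.generateFrom {X ⁻¹' {1}})
      · have he : X ⁻¹' s = X ⁻¹' {1} := by
          ext ω; rcases hX01 ω with h' | h' <;> simp [Set.mem_preimage, h', h0s, h1s]
        rw [he]; exact h1
      · have he : X ⁻¹' s = (X ⁻¹' {1})ᶜ := by
          ext ω; rcases hX01 ω with h' | h' <;> simp [Set.mem_preimage, h', h0s, h1s]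
        rw [he]; exact h1.compl
      · have he : X ⁻¹' s = ∅ := by
          ext ω; rcases hX01 ω with h' | h' <;> simp [Set.mem_preimage, h', h0s, h1s]
        rw [he]
        exact @MeasurableSet.empty Ω (MeasurableSpace.generateFrom {X ⁻¹' {1}})
    · rintro t ht
      rw [Set.mem_singleton_iff] at ht
      subst ht
      exact hXpre1
  have hgen1 : MeasurableSpace.comap W (inferInstanceAs (MeasurableSpace ℝ))
      = MeasurableSpace.generateFrom (Set.preimage W '' (⋃ a : ℚ, {Set.Ioi (a : ℝ)})) := by
    conv_lhs => rw [show (inferInstanceAs (MeasurableSpace ℝ)) = borel ℝ from rfl,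
      Real.borel_eq_generateFrom_Ioi_rat, MeasurableSpace.comap_generateFrom]
  have hind : ∀ᵐ ω ∂μ, ∫ y, X y * W y ∂(κ ω) = (∫ y, X y ∂(κ ω)) * ∫ y, W y ∂(κ ω) := by
    filter_upwards [hprod] with ω hω
    have hκω : IsProbabilityMeasure (κ ω) := inferInstance
    have hindep : IndepFun W X (κ ω) := by
      rw [IndepFun_iff_Indep]
      refine IndepSets.indep hWm.comap_le hXm.comap_le
        (Real.isPiSystem_Ioi_rat.comap W) (IsPiSystem.singleton _) hgen1 hgen2 ?_
      rintro t1 t2 ⟨s1, hs1, rfl⟩ ht2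
      rw [Set.mem_singleton_iff] at ht2
      subst ht2
      rw [Set.mem_iUnion] at hs1
      obtain ⟨q, hq⟩ := hs1
      rw [Set.mem_singleton_iff] at hq
      subst hq
      exact Filter.Eventually.of_forall fun _ => hω q
    exact IndepFun.integral_mul_eq_mul_integral (IndepFun.symm hindep) (hXm.aestronglyMeasurable) (hWm.aestronglyMeasurable)
  have e1 := condExp_ae_eq_integral_condExpKernel (mΩ := mΩ) hmZ hXWint
  have e2 := condExp_ae_eq_integral_condExpKernel (mΩ := mΩ) hmZ hXint
  have e3 := condExp_ae_eq_integral_condExpKernel (mΩ := mΩ) hmZ hWint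
  filter_upwards [hind, e1, e2, e3] with ω h0 h1 h2 h3
  rw [h1, h2, h3]
  exact h0

theorem condexp_aipw_untreated_of_correct_regression
    {Ω : Type*} (mZ : MeasurableSpace Ω) {mΩ : MeasurableSpace Ω} [StandardBorelSpace Ω] [Nonempty Ω]
    (μ : Measure Ω) [IsProbabilityMeasure μ]
    (hmZ : mZ ≤ mΩ)
    (D Y1 Y0 p m1 m0 : Ω → ℝ)
    (hD01 : ∀ ω, D ω = 0 ∨ D ω = 1)
    (hDmeas : Measurable D) (hY1meas : Measurable Y1) (hY0meas : Measurable Y0)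
    (hY1int : Integrable Y1 μ) (hY0int : Integrable Y0 μ)
    (hpmeas : Measurable[mZ] p) (hm1meas : Measurable[mZ] m1) (hm0meas : Measurable[mZ] m0)
    (hm1int : Integrable m1 μ) (hm0int : Integrable m0 μ)
    (ε : ℝ) (hε0 : 0 < ε) (hεhalf : ε < 1/2)
    (hpbdd : ∀ᵐ ω ∂μ, ε ≤ p ω ∧ p ω ≤ 1 - ε)
    (hunconf : CondIndepFun mZ hmZ (fun ω => (Y1 ω, Y0 ω)) D μ)
    (Y ψ1 ψ0 ψ : Ω → ℝ)
    (hY : ∀ ω, Y ω = D ω * Y1 ω + (1 - D ω) * Y0 ω)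
    (hψ1 : ∀ ω, ψ1 ω = D ω * Y ω / p ω - (D ω - p ω) * m1 ω / p ω)
    (hψ0 : ∀ ω, ψ0 ω = (1 - D ω) * Y ω / (1 - p ω) + (D ω - p ω) * m0 ω / (1 - p ω))
    (hψ : ∀ ω, ψ ω = ψ1 ω - ψ0 ω)
    (hm0spec : m0 =ᵐ[μ] μ[Y0 | mZ]) :
    μ[ψ0 | mZ] =ᵐ[μ] μ[Y0 | mZ] := by
  haveI : SigmaFinite (μ.trim hmZ) := by
    haveI : IsFiniteMeasure (μ.trim hmZ) := isFiniteMeasure_trim hmZ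
    infer_instance
  have hDm : Measurable[mΩ] D := hDmeas
  have hY0m : Measurable[mΩ] Y0 := hY0meas
  have hm0m : Measurable[mΩ] m0 := hm0meas.mono hmZ le_rfl
  have hpm : Measurable[mΩ] p := hpmeas.mono hmZ le_rfl
  have hDabs : ∀ ω, |D ω| ≤ 1 := fun ω => by rcases hD01 ω with h' | h' <;> simp [h']
  have h1Dabs : ∀ ω, |1 - D ω| ≤ 1 := fun ω => by rcases hD01 ω with h' | h' <;> simp [h']
  have hDint : Integrable D μ :=
    (integrable_const (1 : ℝ)).mono' (hDm.aestronglyMeasurable (μ := μ))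
      (Filter.Eventually.of_forall fun ω => by simpa using hDabs ω)
  -- the key conditional independence consequence
  have hci : CondIndepFun mZ hmZ Y0 D μ := hunconf.comp measurable_snd measurable_id
  have hcore : μ[fun ω => D ω * Y0 ω | mZ]
      =ᵐ[μ] fun ω => (μ[D|mZ]) ω * (μ[Y0|mZ]) ω :=
    condexp_mul_of_condIndepFun_binary μ mZ hmZ D Y0 hD01 hDm hY0m hY0int hci
  -- notation
  set c : Ω → ℝ := fun ω => (1 - p ω)⁻¹ with hc
  set g : Ω → ℝ := fun ω => (1 - D ω) * (Y0 ω - m0 ω) with hg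
  have hVint : Integrable (fun ω => Y0 ω - m0 ω) μ := hY0int.sub hm0int
  have hgm : Measurable[mΩ] g := (measurable_const.sub hDm).mul (hY0m.sub hm0m)
  have hgint : Integrable g μ :=
    hVint.norm.mono' (hgm.aestronglyMeasurable (μ := μ))
      (Filter.Eventually.of_forall fun ω => by
        simp only [hg, Real.norm_eq_abs, abs_mul, norm_norm]
        calc |1 - D ω| * |Y0 ω - m0 ω| ≤ 1 * |Y0 ω - m0 ω| :=
              mul_le_mul_of_nonneg_right (h1Dabs ω) (abs_nonneg _)
          _ = ‖Y0 ω - m0 ω‖ := by rw [one_mul, Real.norm_eq_abs])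
  have hcm : Measurable[mΩ] c := (measurable_const.sub hpm).inv
  have hcgint : Integrable (fun ω => c ω * g ω) μ := by
    refine (hgint.norm.const_mul ε⁻¹).mono' ((hcm.mul hgm).aestronglyMeasurable (μ := μ)) ?_
    filter_upwards [hpbdd] with ω hb
    have h1p : ε ≤ 1 - p ω := by linarith [hb.2]
    have hcpos : 0 < 1 - p ω := lt_of_lt_of_le hε0 h1p
    simp only [Real.norm_eq_abs, abs_mul, hc]
    have : |(1 - p ω)⁻¹| = (1 - p ω)⁻¹ := abs_of_pos (inv_pos.mpr hcpos)
    rw [this]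
    have hle : (1 - p ω)⁻¹ ≤ ε⁻¹ := inv_anti₀ hε0 h1p
    calc (1 - p ω)⁻¹ * |g ω| ≤ ε⁻¹ * |g ω| :=
          mul_le_mul_of_nonneg_right hle (abs_nonneg _)
      _ = ε⁻¹ * ‖g ω‖ := by rw [Real.norm_eq_abs]
  -- Step A : a.e. rewriting of ψ0
  have hψ0' : ψ0 =ᵐ[μ] fun ω => c ω * g ω + m0 ω := by
    filter_upwards [hpbdd] with ω hb
    have h1p : (1 : ℝ) - p ω ≠ 0 := by
      have : ε ≤ 1 - p ω := by linarith [hb.2]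
      intro hcon; rw [hcon] at this; linarith
    rw [hψ0 ω, hY ω]
    simp only [hc, hg]
    rcases hD01 ω with h' | h' <;> rw [h'] <;> field_simp <;> ring
  -- Step B : conditional expectation computations
  have hm0ce : μ[m0|mZ] = m0 :=
    condExp_of_stronglyMeasurable hmZ hm0meas.stronglyMeasurable hm0int
  have hseq : μ[ψ0|mZ] =ᵐ[μ] μ[fun ω => c ω * g ω + m0 ω|mZ] := condExp_congr_ae hψ0'
  have hadd : μ[fun ω => c ω * g ω + m0 ω|mZ]
      =ᵐ[μ] fun ω => (μ[fun ω => c ω * g ω|mZ]) ω + (μ[m0|mZ]) ω :=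
    condExp_add hcgint hm0int mZ
  have hpull : μ[fun ω => c ω * g ω|mZ] =ᵐ[μ] fun ω => c ω * (μ[g|mZ]) ω :=
    condExp_mul_of_stronglyMeasurable_left ((measurable_const.sub hpmeas).inv).stronglyMeasurable
      hcgint hgint
  -- Step C : μ[g|mZ] = 0 a.e.
  have hDY0int : Integrable (fun ω => D ω * Y0 ω) μ :=
    hY0int.norm.mono' ((hDm.mul hY0m).aestronglyMeasurable (μ := μ))
      (Filter.Eventually.of_forall fun ω => by
        simp only [Real.norm_eq_abs, abs_mul, norm_norm]
        calc |D ω| * |Y0 ω| ≤ 1 * |Y0 ω| :=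
              mul_le_mul_of_nonneg_right (hDabs ω) (abs_nonneg _)
          _ = ‖Y0 ω‖ := by rw [one_mul, Real.norm_eq_abs])
  have hm0Dint : Integrable (fun ω => m0 ω * D ω) μ :=
    hm0int.norm.mono' ((hm0m.mul hDm).aestronglyMeasurable (μ := μ))
      (Filter.Eventually.of_forall fun ω => by
        simp only [Real.norm_eq_abs, abs_mul, norm_norm]
        calc |m0 ω| * |D ω| ≤ |m0 ω| * 1 :=
              mul_le_mul_of_nonneg_left (hDabs ω) (abs_nonneg _)
          _ = ‖m0 ω‖ := by rw [mul_one, Real.norm_eq_abs])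
  have hDVint : Integrable (fun ω => D ω * (Y0 ω - m0 ω)) μ := by
    have he : (fun ω => D ω * (Y0 ω - m0 ω))
        = fun ω => D ω * Y0 ω - m0 ω * D ω := by funext ω; ring
    rw [he]; exact hDY0int.sub hm0Dint
  have hgsub : μ[g|mZ] =ᵐ[μ]
      fun ω => (μ[fun ω => Y0 ω - m0 ω|mZ]) ω - (μ[fun ω => D ω * (Y0 ω - m0 ω)|mZ]) ω := by
    have he : g = fun ω => (Y0 ω - m0 ω) - D ω * (Y0 ω - m0 ω) := by
      funext ω; simp only [hg]; ring
    rw [he]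
    exact condExp_sub hVint hDVint mZ
  have hVsub : μ[fun ω => Y0 ω - m0 ω|mZ]
      =ᵐ[μ] fun ω => (μ[Y0|mZ]) ω - (μ[m0|mZ]) ω := condExp_sub hY0int hm0int mZ
  have hDVsub : μ[fun ω => D ω * (Y0 ω - m0 ω)|mZ]
      =ᵐ[μ] fun ω => (μ[fun ω => D ω * Y0 ω|mZ]) ω - (μ[fun ω => m0 ω * D ω|mZ]) ω := by
    have he : (fun ω => D ω * (Y0 ω - m0 ω))
        = fun ω => D ω * Y0 ω - m0 ω * D ω := by funext ω; ring
    rw [he]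
    exact condExp_sub hDY0int hm0Dint mZ
  have hpull2 : μ[fun ω => m0 ω * D ω|mZ] =ᵐ[μ] fun ω => m0 ω * (μ[D|mZ]) ω :=
    condExp_mul_of_stronglyMeasurable_left hm0meas.stronglyMeasurable hm0Dint hDint
  -- assemble
  rw [hm0ce] at hadd hVsub
  filter_upwards [hseq, hadd, hpull, hgsub, hVsub, hDVsub, hpull2, hcore, hm0spec]
    with ω hA hB hC hD' hE hF hG hH hI
  rw [hA, hB, hC, hD', hE, hF, hG, hH, hI]
  ring
end

section
/- Let d ≥ 1 be an integer, let m : ℝ^d → ℝ be Lipschitz with constant L and satisfy 0 < c₀ ≤ m(x) ≤ C₀ for all x ∈ ℝ^d, let K : ℝ → ℝ be a continuous function with support contained in [−1,1], set K_d(u) := ∏_{j=1}^d K(u_j), and assume κ := ∫_{ℝ^d} K_d(u)² du > 0. For x ∈ ℝ^d and h > 0 define A(x,h) := ∫_{ℝ^d} m(x + h·u)·K_d(u)² du. Then there exists a constant C' (depending only on d, L, c₀, C₀, and K) such that for every x ∈ ℝ^d and every h ∈ (0,1], ∫_{ℝ^d} ( A(x,h)^{−1/2} − (κ·m(x + h·t))^{−1/2}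 )² · m(x + h·t) · K_d(t)² dt ≤ C'·h². -/
/-!
`A(x,h)` is `κ` times a `K_d²`-weighted average of `m` over the cube `x + h [-1,1]^d`, which
contains `x + h t` whenever `K_d(t) ≠ 0`; for such `t`, `A(x,h)` and `κ m(x + h t)` therefore
differ by at most `2 L h κ`, and both are at least `κ c₀`. Since `y ↦ y^{-1/2}` is
`(κ c₀)^{-3/2} / 2`-Lipschitz on `[κ c₀, ∞)`, the integrand is `O(h²) K_d(t)²` uniformly in
`t`, and integrating against `K_d²` gives `O(h²)`.
-/

open MeasureTheory

lemma rpow_neg_half_sub_sq_le {a b p : ℝ} (hp : 0 < p) (ha : p ≤ a) (hb : p ≤ b) :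
    (a ^ (-(1 : ℝ) / 2) - b ^ (-(1 : ℝ) / 2)) ^ 2 ≤ (a - b) ^ 2 / (4 * p ^ 3) := by
  have hrpow : ∀ y : ℝ, 0 ≤ y → y ^ (-(1 : ℝ) / 2) = (√y)⁻¹ := fun y hy => by
    rw [neg_div, Real.rpow_neg hy, Real.sqrt_eq_rpow]
  rw [hrpow a (hp.le.trans ha), hrpow b (hp.le.trans hb)]
  have hsa : √p ≤ √a := Real.sqrt_le_sqrt ha
  have hsb : √p ≤ √b := Real.sqrt_le_sqrt hb
  have hsp : 0 < √p := Real.sqrt_pos.2 hp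
  have hdiff : (√a)⁻¹ - (√b)⁻¹ = (b - a) / (√a * √b * (√a + √b)) := by
    have : 0 < √a := hsp.trans_le hsa
    have : 0 < √b := hsp.trans_le hsb
    field_simp
    linear_combination Real.sq_sqrt (hp.le.trans hb) - Real.sq_sqrt (hp.le.trans ha)
  have hden : 2 * √p ^ 3 ≤ √a * √b * (√a + √b) := by
    nlinarith [mul_le_mul hsa hsb hsp.le (by linarith)]
  rw [hdiff, div_pow, ← neg_sub, neg_sq]
  gcongr
  calc 4 * p ^ 3 = (2 * √p ^ 3) ^ 2 := by
        rw [show (2 * √p ^ 3) ^ 2 = 4 * (√p ^ 2) ^ 3 by ring, Real.sq_sqrt hp.le]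
    _ ≤ _ := by gcongr

lemma norm_le_one_of_prod_ne_zero {ι : Type*} [Fintype ι] {K : ℝ → ℝ}
    (hK : Function.support K ⊆ Set.Icc (-1) 1) {u : ι → ℝ} (hu : ∏ j, K (u j) ≠ 0) : ‖u‖ ≤ 1 := by
  refine (pi_norm_le_iff_of_nonneg zero_le_one).2 fun j => ?_
  rw [Real.norm_eq_abs, abs_le]
  exact hK fun hj => hu (Finset.prod_eq_zero (Finset.mem_univ j) hj)

lemma LipschitzWith.abs_sub_comp_add_smul_le {E : Type*} [NormedAddCommGroup E] [NormedSpace ℝ E]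
    {f : E → ℝ} {L : NNReal} (hf : LipschitzWith L f) (x : E) {h : ℝ} (hh : 0 ≤ h) {u v : E}
    (hu : ‖u‖ ≤ 1) (hv : ‖v‖ ≤ 1) : |f (x + h • u) - f (x + h • v)| ≤ 2 * L * h := by
  rw [← Real.dist_eq]
  calc dist (f (x + h • u)) (f (x + h • v)) ≤ L * dist (x + h • u) (x + h • v) := hf.dist_le_mul _ _
    _ = L * (h * dist u v) := by rw [dist_add_left, dist_smul₀, Real.norm_of_nonneg hh]
    _ ≤ L * (h * 2) := by gcongr; linarith [dist_le_norm_add_norm u v]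
    _ = 2 * L * h := by ring

section WeightedAverage

variable {α : Type*} [MeasurableSpace α] {μ : Measure α} {g w : α → ℝ}

lemma abs_integral_mul_sub_integral_mul_le {c ε : ℝ} (hw0 : ∀ u, 0 ≤ w u) (hw : Integrable w μ)
    (hgw : Integrable (fun u => g u * w u) μ) (hε : ∀ u, w u ≠ 0 → |g u - c| ≤ ε) :
    |∫ u, g u * w u ∂μ - (∫ u, w u ∂μ) * c| ≤ ε * ∫ u, w u ∂μ := by
  have hpoint : ∀ u, ‖(g u - c) * w u‖ ≤ ε * w u := fun u => by
    by_cases hu : w u = 0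
    · simp [hu]
    · rw [norm_mul, Real.norm_eq_abs, Real.norm_of_nonneg (hw0 u)]
      exact mul_le_mul_of_nonneg_right (hε u hu) (hw0 u)
  calc |∫ u, g u * w u ∂μ - (∫ u, w u ∂μ) * c| = ‖∫ u, (g u - c) * w u ∂μ‖ := by
        rw [Real.norm_eq_abs, ← integral_mul_const, ← integral_sub hgw (hw.mul_const c)]
        simp only [sub_mul, mul_comm c]
    _ ≤ ∫ u, ε * w u ∂μ := norm_integral_le_of_norm_le (hw.const_mul ε) (.of_forall hpoint)
    _ = ε * ∫ u, w u ∂μ := integral_const_mul ε w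

lemma integral_rpow_neg_half_sub_sq_mul_le {c₀ C₀ ε : ℝ} (hc₀ : 0 < c₀)
    (hg : ∀ u, g u ∈ Set.Icc c₀ C₀) (hgm : AEStronglyMeasurable g μ) (hw0 : ∀ u, 0 ≤ w u)
    (hκ : 0 < ∫ u, w u ∂μ) (hosc : ∀ u v, w u ≠ 0 → w v ≠ 0 → |g u - g v| ≤ ε) :
    ∫ t, ((∫ u, g u * w u ∂μ) ^ (-(1 : ℝ) / 2) - ((∫ u, w u ∂μ) * g t) ^ (-(1 : ℝ) / 2)) ^ 2
        * g t * w t ∂μ ≤ ε ^ 2 * C₀ / (4 * c₀ ^ 3) := by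
  set κ := ∫ u, w u ∂μ
  set A := ∫ u, g u * w u ∂μ
  have hw : Integrable w μ := .of_integral_ne_zero hκ.ne'
  have hgw : Integrable (fun u => g u * w u) μ :=
    hw.bdd_mul hgm (c := C₀) (.of_forall fun u => by
      rw [Real.norm_of_nonneg (hc₀.le.trans (hg u).1)]; exact (hg u).2)
  have hA_ge : κ * c₀ ≤ A := by
    rw [← integral_mul_const]
    exact integral_mono (hw.mul_const c₀) hgw fun u => by
      simpa [mul_comm] using mul_le_mul_of_nonneg_right (hg u).1 (hw0 u)
  have hpoint : ∀ t, ((A ^ (-(1 : ℝ) / 2) - (κ * g t) ^ (-(1 : ℝ) / 2)) ^ 2 * g t) * w t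
      ≤ ε ^ 2 * C₀ / (4 * κ * c₀ ^ 3) * w t := fun t => by
    rcases eq_or_ne (w t) 0 with ht | ht
    · simp [ht]
    refine mul_le_mul_of_nonneg_right ?_ (hw0 t)
    have hclose : |A - κ * g t| ≤ ε * κ :=
      abs_integral_mul_sub_integral_mul_le hw0 hw hgw (hosc · t · ht)
    calc (A ^ (-(1 : ℝ) / 2) - (κ * g t) ^ (-(1 : ℝ) / 2)) ^ 2 * g t
        ≤ (ε * κ) ^ 2 / (4 * (κ * c₀) ^ 3) * C₀ := by
          gcongr
          · exact (hg t).1.trans' hc₀.le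
          · exact (rpow_neg_half_sub_sq_le (by positivity) hA_ge
              (mul_le_mul_of_nonneg_left (hg t).1 hκ.le)).trans
              (div_le_div_of_nonneg_right (sq_le_sq' (abs_le.1 hclose).1 (abs_le.1 hclose).2)
                (by positivity))
          · exact (hg t).2
      _ = ε ^ 2 * C₀ / (4 * κ * c₀ ^ 3) := by field_simp
  have hnonneg : ∀ t, 0 ≤ (A ^ (-(1 : ℝ) / 2) - (κ * g t) ^ (-(1 : ℝ) / 2)) ^ 2 * g t * w t :=
    fun t => mul_nonneg (mul_nonneg (sq_nonneg _) (hc₀.le.trans (hg t).1)) (hw0 t)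
  calc _ ≤ ∫ t, ε ^ 2 * C₀ / (4 * κ * c₀ ^ 3) * w t ∂μ :=
        integral_mono_of_nonneg (.of_forall hnonneg) (hw.const_mul _) (.of_forall hpoint)
    _ = ε ^ 2 * C₀ / (4 * κ * c₀ ^ 3) * κ := integral_const_mul _ w
    _ = ε ^ 2 * C₀ / (4 * c₀ ^ 3) := by field_simp

end WeightedAverage

theorem variance_standardization_bias_bound_general
    (d : ℕ)
    (m : (Fin d → ℝ) → ℝ) (L : NNReal) (hL : LipschitzWith L m)
    (c₀ C₀ : ℝ) (hc₀ : 0 < c₀) (hm : ∀ x, c₀ ≤ m x ∧ m x ≤ C₀)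
    (K : ℝ → ℝ)
    (hKsupp : Function.support K ⊆ Set.Icc (-1 : ℝ) 1)
    (Kd : (Fin d → ℝ) → ℝ) (hKd : Kd = fun u => ∏ j, K (u j))
    (κ : ℝ) (hκ : κ = ∫ u : Fin d → ℝ, (Kd u) ^ 2) (hκpos : 0 < κ)
    (A : (Fin d → ℝ) → ℝ → ℝ)
    (hA : A = fun x h => ∫ u : Fin d → ℝ, m (x + h • u) * (Kd u) ^ 2) :
    ∃ C' : ℝ, ∀ (x : Fin d → ℝ) (h : ℝ), 0 < h → h ≤ 1 →
      (∫ t : Fin d → ℝ,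
        ((A x h) ^ (-(1 : ℝ) / 2) - (κ * m (x + h • t)) ^ (-(1 : ℝ) / 2)) ^ 2
          * m (x + h • t) * (Kd t) ^ 2)
        ≤ C' * h ^ 2 := by
  have hsupp : ∀ u, Kd u ^ 2 ≠ 0 → ‖u‖ ≤ 1 := fun u hu =>
    norm_le_one_of_prod_ne_zero hKsupp (by simpa [hKd] using hu)
  refine ⟨L ^ 2 * C₀ / c₀ ^ 3, fun x h hh _ => ?_⟩
  subst hA hκ
  calc _ ≤ (2 * L * h) ^ 2 * C₀ / (4 * c₀ ^ 3) :=
        integral_rpow_neg_half_sub_sq_mul_le (g := fun u => m (x + h • u)) hc₀ (fun _ => hm _)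
          (hL.continuous.comp (continuous_const.add (continuous_const_smul h))).aestronglyMeasurable
          (fun _ => sq_nonneg _) hκpos
          fun u v hu hv => hL.abs_sub_comp_add_smul_le x hh.le (hsupp u hu) (hsupp v hv)
    _ = L ^ 2 * C₀ / c₀ ^ 3 * h ^ 2 := by field_simp; ring

theorem variance_standardization_bias_bound
    (d : ℕ) (hd : 1 ≤ d)
    (m : (Fin d → ℝ) → ℝ) (L : NNReal) (hL : LipschitzWith L m)
    (c₀ C₀ : ℝ) (hc₀ : 0 < c₀) (hm : ∀ x, c₀ ≤ m x ∧ m x ≤ C₀)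
    (K : ℝ → ℝ) (hK : Continuous K)
    (hKsupp : Function.support K ⊆ Set.Icc (-1 : ℝ) 1)
    (Kd : (Fin d → ℝ) → ℝ) (hKd : Kd = fun u => ∏ j, K (u j))
    (κ : ℝ) (hκ : κ = ∫ u : Fin d → ℝ, (Kd u) ^ 2) (hκpos : 0 < κ)
    (A : (Fin d → ℝ) → ℝ → ℝ)
    (hA : A = fun x h => ∫ u : Fin d → ℝ, m (x + h • u) * (Kd u) ^ 2) :
    ∃ C' : ℝ, ∀ (x : Fin d → ℝ) (h : ℝ), 0 < h → h ≤ 1 →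
      (∫ t : Fin d → ℝ,
        ((A x h) ^ (-(1 : ℝ) / 2) - (κ * m (x + h • t)) ^ (-(1 : ℝ) / 2)) ^ 2
          * m (x + h • t) * (Kd t) ^ 2)
        ≤ C' * h ^ 2 :=
  variance_standardization_bias_bound_general d m L hL c₀ C₀ hc₀ hm K hKsupp Kd hKd κ hκ hκpos A hA
end

section
/- Let d ≥ 1 be an integer, let m : ℝ^d → ℝ be Lipschitz with constant L and satisfy 0 < c₀ ≤ m(x) ≤ C₀ for all x ∈ ℝ^d, let K : ℝ → ℝ be Lipschitz with constant L_K and with support contained in [−1,1], set K_d(u) := ∏_{j=1}^d K(u_j), and assume κ := ∫_{ℝ^d} K_d(u)² du > 0. For x ∈ ℝ^d and h > 0 define A(x,h) := ∫_{ℝ^d} m(x + h·u)·K_d(u)² du and the normalized kernel function Φ_{x,h}(t) := (h^d · A(x,h))^{−1/2} · K_d((t − x)/h), which satisfies ∫_{ℝ^d} Φ_{x,h}(t)²·m(t) dt = 1. Then there exists a constant C' (depending only on d, L, L_K, c₀, C₀, and K) such that for all x, x' ∈ ℝ^d and every h ∈ (0,1], ∫_{ℝ^d} (Φ_{x,h}(t)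 − Φ_{x',h}(t))² · m(t) dt ≤ C' · h^{−2} · ‖x − x'‖². -/
/-!
Put `G_x(t) := K_d(h⁻¹ (t - x))`. In `L²(m dt)` one has `Φ_{x,h} = G_x / ‖G_x‖`, and the change of
variables `t = x + h u` gives `‖G_x‖² = h^d A(x,h) ≥ h^d c₀ κ`. Expanding the square and using
AM–GM, `‖G/‖G‖ - G'/‖G'‖‖² ≤ ‖G - G'‖² / (‖G‖ ‖G'‖)`. Since `K_d` is Lipschitz and supported in the
unit ball, `|G_x - G_{x'}| ≤ C h⁻¹ ‖x - x'‖` on a set of measure at most `2 (2h)^d`, so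
`‖G_x - G_{x'}‖² ≤ C' h^{d-2} ‖x - x'‖²`, and dividing by `h^d c₀ κ` gives the bound.
-/

open MeasureTheory Metric Finset Function
open scoped ENNReal

lemma norm_prod_sub_prod_le {ι R : Type*} [NormedCommRing R] [NormOneClass R] (s : Finset ι)
    {f g : ι → R} {M : ℝ} (hM : 1 ≤ M) (hf : ∀ i, ‖f i‖ ≤ M) (hg : ∀ i, ‖g i‖ ≤ M) :
    ‖∏ i ∈ s, f i - ∏ i ∈ s, g i‖ ≤ M ^ #s * ∑ i ∈ s, ‖f i - g i‖ := by
  induction s using Finset.cons_induction with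
  | empty => simp
  | cons a s ha ih =>
    have hQ : ‖∏ i ∈ s, g i‖ ≤ M ^ #s :=
      calc ‖∏ i ∈ s, g i‖ ≤ ∏ i ∈ s, ‖g i‖ := Finset.norm_prod_le _ _
        _ ≤ ∏ _i ∈ s, M := prod_le_prod (fun i _ => norm_nonneg _) fun i _ => hg i
        _ = M ^ #s := prod_const M
    have hδ : 0 ≤ M ^ #s * ‖f a - g a‖ := by positivity
    rw [prod_cons, prod_cons, sum_cons, card_cons, pow_succ]
    calc ‖f a * ∏ i ∈ s, f i - g a * ∏ i ∈ s, g i‖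
        = ‖f a * (∏ i ∈ s, f i - ∏ i ∈ s, g i) + (f a - g a) * ∏ i ∈ s, g i‖ := by
          congr 1; ring
      _ ≤ M * (M ^ #s * ∑ i ∈ s, ‖f i - g i‖) + ‖f a - g a‖ * M ^ #s := by
          refine (norm_add_le _ _).trans (add_le_add ?_ ?_) <;>
            refine (norm_mul_le _ _).trans ?_
          · gcongr; exact hf a
          · gcongr
      _ ≤ M ^ #s * M * (‖f a - g a‖ + ∑ i ∈ s, ‖f i - g i‖) := by
          nlinarith [mul_le_mul_of_nonneg_left hM hδ]

lemma lipschitzWith_prod_apply {ι X R : Type*} [Fintype ι] [PseudoMetricSpace X]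
    [NormedCommRing R] [NormOneClass R] {K : X → R} {LK M : NNReal} (hK : LipschitzWith LK K)
    (hK_le : ∀ t, ‖K t‖ ≤ M) (hM : 1 ≤ M) :
    LipschitzWith (M ^ Fintype.card ι * Fintype.card ι * LK) fun u : ι → X => ∏ i, K (u i) := by
  refine LipschitzWith.of_dist_le_mul fun u v => ?_
  have hcoord : ∀ i, ‖K (u i) - K (v i)‖ ≤ LK * dist u v := fun i => by
    rw [← dist_eq_norm]
    exact (hK.dist_le_mul _ _).trans (by gcongr; exact dist_le_pi_dist u v i)
  calc dist (∏ i, K (u i)) (∏ i, K (v i))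
      ≤ M ^ Fintype.card ι * ∑ i, ‖K (u i) - K (v i)‖ := by
        rw [dist_eq_norm, ← card_univ]
        exact norm_prod_sub_prod_le _ (mod_cast hM) (fun t => hK_le _) (fun t => hK_le _)
    _ ≤ M ^ Fintype.card ι * ∑ _i : ι, LK * dist u v := by gcongr with i; exact hcoord i
    _ = _ := by simp only [sum_const, card_univ, nsmul_eq_mul]; push_cast; ring

lemma exists_lipschitzWith_prod_apply {ι : Type*} [Fintype ι] {K : ℝ → ℝ} {LK : NNReal}
    (hK : LipschitzWith LK K) (hK_cs : HasCompactSupport K) :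
    ∃ C, LipschitzWith C fun u : ι → ℝ => ∏ i, K (u i) := by
  obtain ⟨M, hM⟩ := hK.continuous.bounded_above_of_compact_support hK_cs
  exact ⟨_, lipschitzWith_prod_apply (M := ⟨max M 1, by positivity⟩) hK
    (fun t => (hM t).trans (le_max_left _ _)) (le_max_right M 1)⟩

lemma support_prod_apply_subset_closedBall {ι : Type*} [Fintype ι] {K : ℝ → ℝ} {r : ℝ}
    (hr : 0 ≤ r) (hK : support K ⊆ Set.Icc (-r) r) :
    support (fun u : ι → ℝ => ∏ i, K (u i)) ⊆ closedBall 0 r := by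
  intro u hu
  rw [closedBall_pi _ hr]
  intro i _
  have hKi : K (u i) ≠ 0 := fun h0 => hu (prod_eq_zero (mem_univ i) h0)
  simpa [Real.closedBall_eq_Icc] using hK hKi

section Rescaling

variable {E : Type*} [NormedAddCommGroup E] [NormedSpace ℝ E]

lemma support_comp_smul_sub_subset_closedBall {F : Type*} [Zero F] {f : E → F} {r h : ℝ}
    (hh : 0 < h) (hf : support f ⊆ closedBall 0 r) (x : E) :
    support (fun t => f (h⁻¹ • (t - x))) ⊆ closedBall x (h * r) := by
  intro t ht
  have := hf ht
  rw [mem_closedBall_zero_iff, norm_smul, Real.norm_eq_abs, abs_inv, abs_of_pos hh,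
    inv_mul_le_iff₀ hh] at this
  rwa [mem_closedBall, dist_eq_norm]

lemma hasCompactSupport_comp_smul_sub [ProperSpace E] {F : Type*} [Zero F] {f : E → F} {r h : ℝ}
    (hh : 0 < h) (hf : support f ⊆ closedBall 0 r) (x : E) :
    HasCompactSupport fun t => f (h⁻¹ • (t - x)) :=
  .of_support_subset_isCompact (isCompact_closedBall _ _)
    (support_comp_smul_sub_subset_closedBall hh hf x)

variable [MeasurableSpace E] [BorelSpace E] [FiniteDimensional ℝ E]
  (μ : Measure E) [μ.IsAddHaarMeasure]

lemma integral_comp_add_smul {F : Type*} [NormedAddCommGroup F] [NormedSpace ℝ F] (f : E → F)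
    (x : E) (h : ℝ) :
    ∫ u, f (x + h • u) ∂μ = |(h ^ Module.finrank ℝ E)⁻¹| • ∫ t, f t ∂μ := by
  rw [μ.integral_comp_smul (fun v => f (x + v)), integral_add_left_eq_self]

lemma integral_sq_comp_smul_sub_mul (F w : E → ℝ) (x : E) {h : ℝ} (hh : 0 < h) :
    ∫ t, F (h⁻¹ • (t - x)) ^ 2 * w t ∂μ
      = h ^ Module.finrank ℝ E * ∫ u, w (x + h • u) * F u ^ 2 ∂μ := by
  have := integral_comp_add_smul μ (fun t => F (h⁻¹ • (t - x)) ^ 2 * w t) x h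
  simp only [add_sub_cancel_left, smul_smul, inv_mul_cancel₀ hh.ne', one_smul] at this
  simp_rw [mul_comm (w _)]
  rw [this, abs_of_pos (by positivity), smul_eq_mul, ← mul_assoc, mul_inv_cancel₀ (by positivity),
    one_mul]

end Rescaling

lemma integral_le_mul_measureReal_of_support_subset {α : Type*} [MeasurableSpace α]
    {μ : Measure α} {f : α → ℝ} {s : Set α} {B : ℝ} (hs : MeasurableSet s) (hμs : μ s ≠ ∞)
    (hf_nonneg : 0 ≤ f) (hf_le : ∀ t, f t ≤ B) (hf_supp : support f ⊆ s) :
    ∫ t, f t ∂μ ≤ B * μ.real s := by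
  calc ∫ t, f t ∂μ ≤ ∫ t, s.indicator (fun _ => B) t ∂μ := by
        refine integral_mono_of_nonneg (ae_of_all _ hf_nonneg)
          ((integrableOn_const hμs).integrable_indicator hs) (ae_of_all _ fun t => ?_)
        by_cases ht : t ∈ s
        · simpa [ht] using hf_le t
        · simp [ht, notMem_support.mp fun h => ht (hf_supp h)]
    _ = B * μ.real s := by rw [integral_indicator_const _ hs, smul_eq_mul, mul_comm]

lemma rpow_neg_one_div_two_eq_inv_sqrt {p : ℝ} (hp : 0 ≤ p) : p ^ (-(1 : ℝ) / 2) = (√p)⁻¹ := by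
  rw [neg_div, Real.rpow_neg hp, Real.sqrt_eq_rpow]

section Normalization

variable {α : Type*} [MeasurableSpace α] {μ : Measure α} {f g w : α → ℝ} {p q : ℝ}

lemma integral_sq_rpow_neg_half_mul_eq_one (hf : ∫ t, f t ^ 2 * w t ∂μ = p) (hp : 0 < p) :
    ∫ t, (p ^ (-(1 : ℝ) / 2) * f t) ^ 2 * w t ∂μ = 1 := by
  simp_rw [mul_pow, mul_assoc]
  rw [integral_const_mul, hf, rpow_neg_one_div_two_eq_inv_sqrt hp.le, inv_pow,
    Real.sq_sqrt hp.le, inv_mul_cancel₀ hp.ne']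

lemma integral_sq_sub_rpow_neg_half_mul_le (hf : ∫ t, f t ^ 2 * w t ∂μ = p)
    (hg : ∫ t, g t ^ 2 * w t ∂μ = q) (hp : 0 < p) (hq : 0 < q)
    (hf_int : Integrable (fun t => f t ^ 2 * w t) μ)
    (hg_int : Integrable (fun t => g t ^ 2 * w t) μ)
    (hfg_int : Integrable (fun t => (f t - g t) ^ 2 * w t) μ) :
    ∫ t, (p ^ (-(1 : ℝ) / 2) * f t - q ^ (-(1 : ℝ) / 2) * g t) ^ 2 * w t ∂μ
      ≤ (∫ t, (f t - g t) ^ 2 * w t ∂μ) / √(p * q) := by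
  rw [rpow_neg_one_div_two_eq_inv_sqrt hp.le, rpow_neg_one_div_two_eq_inv_sqrt hq.le]
  set a := (√p)⁻¹
  set b := (√q)⁻¹
  -- polarization: `2 f g = f ^ 2 + g ^ 2 - (f - g) ^ 2`
  have hexpand : ∀ t, (a * f t - b * g t) ^ 2 * w t = (a ^ 2 - a * b) * (f t ^ 2 * w t)
      + (b ^ 2 - a * b) * (g t ^ 2 * w t) + a * b * ((f t - g t) ^ 2 * w t) := fun t => by ring
  simp_rw [hexpand]
  have hsum_int : Integrable (fun t => (a ^ 2 - a * b) * (f t ^ 2 * w t)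
      + (b ^ 2 - a * b) * (g t ^ 2 * w t)) μ := (hf_int.const_mul _).add (hg_int.const_mul _)
  rw [integral_add hsum_int (hfg_int.const_mul _),
    integral_add (hf_int.const_mul _) (hg_int.const_mul _), integral_const_mul, integral_const_mul,
    integral_const_mul, hf, hg]
  obtain ⟨s, hs, rfl⟩ : ∃ s, 0 < s ∧ p = s ^ 2 :=
    ⟨√p, Real.sqrt_pos.2 hp, (Real.sq_sqrt hp.le).symm⟩
  obtain ⟨r, hr, rfl⟩ : ∃ r, 0 < r ∧ q = r ^ 2 :=
    ⟨√q, Real.sqrt_pos.2 hq, (Real.sq_sqrt hq.le).symm⟩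
  simp only [a, b, Real.sqrt_sq hs.le, Real.sqrt_sq hr.le, ← mul_pow,
    Real.sqrt_sq (mul_pos hs hr).le]
  rw [le_div_iff₀ (by positivity)]
  field_simp
  nlinarith [sq_nonneg (s - r)]

end Normalization

lemma integral_sq_sub_comp_smul_sub_le {ι : Type*} [Fintype ι] {F w : (ι → ℝ) → ℝ} {CF : NNReal}
    {C₀ h : ℝ} (hF : LipschitzWith CF F) (hF_supp : support F ⊆ closedBall 0 1) (hw₀ : 0 ≤ w)
    (hw : ∀ t, w t ≤ C₀) (hh : 0 < h) (x x' : ι → ℝ) :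
    ∫ t, (F (h⁻¹ • (t - x)) - F (h⁻¹ • (t - x'))) ^ 2 * w t
      ≤ (CF * (h⁻¹ * ‖x - x'‖)) ^ 2 * C₀ * (2 * (2 * h) ^ Fintype.card ι) := by
  have hball : ∀ y, support (fun t => F (h⁻¹ • (t - y))) ⊆ closedBall y h := fun y => by
    simpa using support_comp_smul_sub_subset_closedBall hh hF_supp y
  have hvol : ∀ y : ι → ℝ, volume.real (closedBall y h) = (2 * h) ^ Fintype.card ι := fun y => by
    rw [Measure.real, Real.volume_pi_closedBall y hh.le, ENNReal.toReal_ofReal (by positivity)]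
  have hdiff : ∀ t, |F (h⁻¹ • (t - x)) - F (h⁻¹ • (t - x'))| ≤ CF * (h⁻¹ * ‖x - x'‖) := fun t => by
    have := hF.dist_le_mul (h⁻¹ • (t - x)) (h⁻¹ • (t - x'))
    rwa [dist_eq_norm, dist_eq_norm, ← smul_sub, sub_sub_sub_cancel_left, norm_smul, norm_inv,
      Real.norm_of_nonneg hh.le, norm_sub_rev x', Real.norm_eq_abs] at this
  have hC₀ : 0 ≤ C₀ := (hw₀ x).trans (hw x)
  calc _ ≤ (CF * (h⁻¹ * ‖x - x'‖)) ^ 2 * C₀ * volume.real (closedBall x h ∪ closedBall x' h) := by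
        refine integral_le_mul_measureReal_of_support_subset
          (measurableSet_closedBall.union measurableSet_closedBall)
          (measure_union_lt_top measure_closedBall_lt_top measure_closedBall_lt_top).ne
          (fun t => mul_nonneg (sq_nonneg _) (hw₀ t)) (fun t => ?_) (fun t ht => ?_)
        · rw [← sq_abs]
          gcongr
          exacts [hw₀ t, hdiff t, hw t]
        · by_contra hS
          rw [Set.mem_union, not_or] at hS
          have hx : F (h⁻¹ • (t - x)) = 0 := notMem_support.mp fun h => hS.1 (hball x h)
          have hx' : F (h⁻¹ • (t - x')) = 0 := notMem_support.mp fun h => hS.2 (hball x' h)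
          exact ht (by simp [hx, hx'])
    _ ≤ (CF * (h⁻¹ * ‖x - x'‖)) ^ 2 * C₀ * (2 * (2 * h) ^ Fintype.card ι) := by
        gcongr
        exact (measureReal_union_le _ _).trans_eq (by rw [hvol, hvol]; ring)

lemma integrable_sq_mul_of_hasCompactSupport {X : Type*} [TopologicalSpace X] [MeasurableSpace X]
    [OpensMeasurableSpace X] {μ : Measure X} [IsFiniteMeasureOnCompacts μ] {f w : X → ℝ}
    (hf : Continuous f) (hf_cs : HasCompactSupport f) (hw : Continuous w) :
    Integrable (fun t => f t ^ 2 * w t) μ :=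
  ((hf.pow 2).mul hw).integrable_of_hasCompactSupport
    (hf_cs.mono fun t ht h0 => ht (by simp [h0]))

lemma integral_sq_sub_normalized_comp_smul_sub_le {ι : Type*} [Fintype ι]
    {F w : (ι → ℝ) → ℝ} {CF : NNReal} {C₀ h ε p q : ℝ} {x x' : ι → ℝ} (hF : LipschitzWith CF F)
    (hF_supp : support F ⊆ closedBall 0 1) (hw : Continuous w) (hw₀ : 0 ≤ w)
    (hwC : ∀ t, w t ≤ C₀) (hh : 0 < h) (hε : 0 < ε)
    (hp : ∫ t, F (h⁻¹ • (t - x)) ^ 2 * w t = p) (hq : ∫ t, F (h⁻¹ • (t - x')) ^ 2 * w t = q)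
    (hεp : ε ≤ p) (hεq : ε ≤ q) :
    ∫ t, (p ^ (-(1 : ℝ) / 2) * F (h⁻¹ • (t - x)) - q ^ (-(1 : ℝ) / 2) * F (h⁻¹ • (t - x'))) ^ 2
        * w t
      ≤ (CF * (h⁻¹ * ‖x - x'‖)) ^ 2 * C₀ * (2 * (2 * h) ^ Fintype.card ι) / ε := by
  have hint : ∀ {f : (ι → ℝ) → ℝ}, Continuous f → HasCompactSupport f →
      Integrable fun t => f t ^ 2 * w t :=
    fun hf hf_cs => integrable_sq_mul_of_hasCompactSupport hf hf_cs hw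
  have hG_cont : ∀ y, Continuous fun t => F (h⁻¹ • (t - y)) :=
    fun y => hF.continuous.comp (by fun_prop)
  have hG_cs : ∀ y, HasCompactSupport fun t => F (h⁻¹ • (t - y)) :=
    fun y => hasCompactSupport_comp_smul_sub hh hF_supp y
  have hε_le_sqrt : ε ≤ √(p * q) :=
    Real.le_sqrt_of_sq_le (sq ε ▸ mul_le_mul hεp hεq hε.le (hε.le.trans hεp))
  have hC₀ : 0 ≤ C₀ := (hw₀ 0).trans (hwC 0)
  calc _ ≤ (∫ t, (F (h⁻¹ • (t - x)) - F (h⁻¹ • (t - x'))) ^ 2 * w t) / √(p * q) :=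
        integral_sq_sub_rpow_neg_half_mul_le hp hq (hε.trans_le hεp) (hε.trans_le hεq)
          (hint (hG_cont x) (hG_cs x)) (hint (hG_cont x') (hG_cs x'))
          (hint ((hG_cont x).sub (hG_cont x')) ((hG_cs x).sub (hG_cs x')))
    _ ≤ _ := by
        gcongr
        exact integral_sq_sub_comp_smul_sub_le hF hF_supp hw₀ hwC hh x x'

theorem standardized_kernel_increment_bound_general
    (d : ℕ)
    (m : (Fin d → ℝ) → ℝ) (L : NNReal) (hL : LipschitzWith L m)
    (c₀ C₀ : ℝ) (hc₀ : 0 < c₀) (hm : ∀ x, c₀ ≤ m x ∧ m x ≤ C₀)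
    (K : ℝ → ℝ) (LK : NNReal) (hK : LipschitzWith LK K)
    (hKsupp : Function.support K ⊆ Set.Icc (-1 : ℝ) 1)
    (Kd : (Fin d → ℝ) → ℝ) (hKd : Kd = fun u => ∏ j, K (u j))
    (κ : ℝ) (hκ : κ = ∫ u : Fin d → ℝ, (Kd u) ^ 2) (hκpos : 0 < κ)
    (A : (Fin d → ℝ) → ℝ → ℝ)
    (hA : A = fun x h => ∫ u : Fin d → ℝ, m (x + h • u) * (Kd u) ^ 2)
    (Φ : (Fin d → ℝ) → ℝ → (Fin d → ℝ) → ℝ)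
    (hΦ : Φ = fun x h t => (h ^ d * A x h) ^ (-(1 : ℝ) / 2) * Kd (h⁻¹ • (t - x))) :
    (∀ (x : Fin d → ℝ) (h : ℝ), 0 < h → h ≤ 1 →
      (∫ t : Fin d → ℝ, (Φ x h t) ^ 2 * m t) = 1) ∧
    ∃ C' : ℝ, ∀ (x x' : Fin d → ℝ) (h : ℝ), 0 < h → h ≤ 1 →
      (∫ t : Fin d → ℝ, (Φ x h t - Φ x' h t) ^ 2 * m t)
        ≤ C' * (h ^ 2)⁻¹ * ‖x - x'‖ ^ 2 := by
  subst hΦ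
  have hm₀ : 0 ≤ m := fun t => hc₀.le.trans (hm t).1
  have hKd_supp : support Kd ⊆ closedBall 0 1 :=
    hKd ▸ support_prod_apply_subset_closedBall zero_le_one (by simpa using hKsupp)
  obtain ⟨CK, hKd_lip⟩ : ∃ CK, LipschitzWith CK Kd :=
    hKd ▸ exists_lipschitzWith_prod_apply hK (.of_support_subset_isCompact isCompact_Icc hKsupp)
  have hG_sq : ∀ x {h : ℝ}, 0 < h → ∫ t, Kd (h⁻¹ • (t - x)) ^ 2 * m t = h ^ d * A x h :=
    fun x h hh => by rw [integral_sq_comp_smul_sub_mul volume Kd m x hh, Module.finrank_fin_fun, hA]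
  have hA_ge : ∀ x h, c₀ * κ ≤ A x h := fun x h => by
    have hA_int : Integrable fun u => m (x + h • u) * Kd u ^ 2 :=
      (integrable_sq_mul_of_hasCompactSupport hKd_lip.continuous
        (.of_support_subset_isCompact (isCompact_closedBall 0 1) hKd_supp)
        (hL.continuous.comp (by fun_prop))).congr (ae_of_all _ fun u => mul_comm _ _)
    rw [hA, hκ, ← integral_const_mul]
    exact integral_mono_of_nonneg (ae_of_all _ fun u => by positivity) hA_int
      (ae_of_all _ fun u => mul_le_mul_of_nonneg_right (hm _).1 (sq_nonneg _))
  have hε : ∀ {h : ℝ}, 0 < h → 0 < h ^ d * (c₀ * κ) := fun hh => by positivity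
  have hp : ∀ x {h : ℝ}, 0 < h → h ^ d * (c₀ * κ) ≤ h ^ d * A x h :=
    fun x h hh => by gcongr; exact hA_ge x h
  refine ⟨fun x h hh _ => integral_sq_rpow_neg_half_mul_eq_one (hG_sq x hh)
    ((hε hh).trans_le (hp x hh)), 2 ^ (d + 1) * C₀ * CK ^ 2 / (c₀ * κ), fun x x' h hh _ => ?_⟩
  refine (integral_sq_sub_normalized_comp_smul_sub_le hKd_lip hKd_supp hL.continuous hm₀
    (fun t => (hm t).2) hh (hε hh) (hG_sq x hh) (hG_sq x' hh) (hp x hh) (hp x' hh)).trans_eq ?_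
  rw [Fintype.card_fin]
  field_simp
  ring

theorem standardized_kernel_increment_bound
    (d : ℕ) (hd : 1 ≤ d)
    (m : (Fin d → ℝ) → ℝ) (L : NNReal) (hL : LipschitzWith L m)
    (c₀ C₀ : ℝ) (hc₀ : 0 < c₀) (hm : ∀ x, c₀ ≤ m x ∧ m x ≤ C₀)
    (K : ℝ → ℝ) (LK : NNReal) (hK : LipschitzWith LK K)
    (hKsupp : Function.support K ⊆ Set.Icc (-1 : ℝ) 1)
    (Kd : (Fin d → ℝ) → ℝ) (hKd : Kd = fun u => ∏ j, K (u j))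
    (κ : ℝ) (hκ : κ = ∫ u : Fin d → ℝ, (Kd u) ^ 2) (hκpos : 0 < κ)
    (A : (Fin d → ℝ) → ℝ → ℝ)
    (hA : A = fun x h => ∫ u : Fin d → ℝ, m (x + h • u) * (Kd u) ^ 2)
    (Φ : (Fin d → ℝ) → ℝ → (Fin d → ℝ) → ℝ)
    (hΦ : Φ = fun x h t => (h ^ d * A x h) ^ (-(1 : ℝ) / 2) * Kd (h⁻¹ • (t - x))) :
    (∀ (x : Fin d → ℝ) (h : ℝ), 0 < h → h ≤ 1 →
      (∫ t : Fin d → ℝ, (Φ x h t) ^ 2 * m t) = 1) ∧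
    ∃ C' : ℝ, ∀ (x x' : Fin d → ℝ) (h : ℝ), 0 < h → h ≤ 1 →
      (∫ t : Fin d → ℝ, (Φ x h t - Φ x' h t) ^ 2 * m t)
        ≤ C' * (h ^ 2)⁻¹ * ‖x - x'‖ ^ 2 :=
  standardized_kernel_increment_bound_general d m L hL c₀ C₀ hc₀ hm K LK hK hKsupp Kd hKd κ hκ hκpos
    A hA Φ hΦ
end
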